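/- arXiv:1010.6115 — 2 statements merged into one kernel-verified Lean document; each statement's English description precedes it below -/
import Mathlib

section
/- For λ in the cone Γ_k (all σ_j(λ) > 0 for 1 ≤ j ≤ k) with 0 ≤ l < k ≤ n, the Newton–Maclaurin inequality holds: k(n-l+1)σ_{l-1}(λ)σ_k(λ) ≤ l(n-k+1)σ_l(λ)σ_{k-1}(λ). -/
/-!
Write `E_j = σ_j / C(n, j)` for the elementary symmetric means of a multiset of `n` reals.
Newton's inequality `E_m E_{m+2} ≤ E_{m+1}^2` holds for every real multiset. By Rolle's theorem
the derivative of `∏ (X - λ_i)` again has only real roots, and these have the same means `E_j`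
for `j < n`; so one may pass to a multiset with exactly `m + 2` elements. There, if no element
vanishes, inverting the elements turns `E_j` into `E_{n-j} / ∏ λ_i`, which reduces the claim to
`E_2 ≤ E_1^2`, and this, by the same reduction, to `xy ≤ ((x + y) / 2)^2`.
On `Γ_k` the means `E_0, …, E_k` are positive, so Newton's inequality makes `E_{j+1} / E_j`
nonincreasing for `j < k`. Hence `E_{l-1} E_k ≤ E_l E_{k-1}`, which is the claim once the binomial
coefficients are cleared.
-/

/-- The `k`-th elementary symmetric polynomial of `x : Fin n → ℝ`. -/
def esymm (n : ℕ) (k : ℕ) (x : Fin n → ℝ) : ℝ :=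
  ∑ s ∈ Finset.powersetCard k (Finset.univ : Finset (Fin n)), ∏ i ∈ s, x i

/-- `σ_j` with the convention `σ_j = 0` for negative `j` (so `σ_{-1} = 0`). -/
def esymmZ (n : ℕ) (j : ℤ) (x : Fin n → ℝ) : ℝ :=
  if j < 0 then 0 else esymm n j.toNat x

/-- The Garding cone `Γ_k`: all `σ_j > 0` for `1 ≤ j ≤ k`. -/
def inGamma (n k : ℕ) (x : Fin n → ℝ) : Prop :=
  ∀ j : ℕ, 1 ≤ j → j ≤ k → 0 < esymm n j x

theorem mul_le_mul_of_mul_le_sq {R : Type*} [CommRing R] [LinearOrder R] [IsStrictOrderedRing R]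
    {a : ℕ → R} {k : ℕ} (hpos : ∀ m ≤ k, 0 < a m)
    (hconc : ∀ m, m + 2 ≤ k → a m * a (m + 2) ≤ a (m + 1) ^ 2) {i j : ℕ} (hij : i ≤ j)
    (hjk : j + 1 ≤ k) : a i * a (j + 1) ≤ a (i + 1) * a j := by
  induction j, hij using Nat.le_induction with
  | base => rw [mul_comm]
  | succ j _ ih =>
    have hi := hpos (i + 1) (by omega)
    have hj := hpos j (by omega)
    have hj1 := hpos (j + 1) (by omega)
    have hj2 := hpos (j + 2) hjk
    have hprod := mul_le_mul (ih (by omega)) (hconc j hjk) (by positivity) (by positivity)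
    refine le_of_mul_le_mul_right (a := a j * a (j + 1)) ?_ (by positivity)
    calc a i * a (j + 1 + 1) * (a j * a (j + 1)) = a i * a (j + 1) * (a j * a (j + 2)) := by ring
      _ ≤ a (i + 1) * a j * a (j + 1) ^ 2 := hprod
      _ = a (i + 1) * a (j + 1) * (a j * a (j + 1)) := by ring

namespace Multiset

variable {R : Type*} [CommSemiring R]

@[simp] theorem esymm_zero (s : Multiset R) : s.esymm 0 = 1 := by simp [esymm]

theorem esymm_cons_succ (a : R) (s : Multiset R) (j : ℕ) :
    (a ::ₘ s).esymm (j + 1) = s.esymm (j + 1) + a * s.esymm j := by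
  simp [esymm, map_map, ← sum_map_mul_left]

theorem esymm_card (s : Multiset R) : s.esymm (card s) = s.prod := by simp [esymm]

theorem esymm_eq_zero_of_card_lt {s : Multiset R} {j : ℕ} (h : card s < j) : s.esymm j = 0 := by
  simp [esymm, h]

variable {K : Type*} [Field K]

theorem prod_mul_esymm_map_inv {s : Multiset K} (hs : (0 : K) ∉ s) {j : ℕ} (hj : j ≤ card s) :
    s.prod * (s.map (·⁻¹)).esymm j = s.esymm (card s - j) := by
  induction s using Multiset.induction generalizing j with
  | empty => simp_all
  | cons a s ih =>
    rw [mem_cons, not_or] at hs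
    have ha : a ≠ 0 := Ne.symm hs.1
    rcases j with _ | j
    · rw [esymm_zero, mul_one, Nat.sub_zero, esymm_card]
    · rw [card_cons] at hj
      rw [map_cons, prod_cons, esymm_cons_succ, card_cons, Nat.add_sub_add_right]
      obtain hjs | rfl := (Nat.le_of_lt_succ hj).lt_or_eq
      · obtain ⟨i, hi⟩ : ∃ i, card s - j = i + 1 := ⟨card s - j - 1, by omega⟩
        rw [hi, esymm_cons_succ, ← hi, ← ih hs.2 hjs.le, show i = card s - (j + 1) by omega,
          ← ih hs.2 hjs]
        field_simp
        ring
      · have h := ih hs.2 le_rfl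
        rw [Nat.sub_self, esymm_zero] at h
        rw [esymm_eq_zero_of_card_lt (by simp), Nat.sub_self, esymm_zero, ← h, zero_add,
          mul_mul_mul_comm, mul_inv_cancel₀ ha, one_mul]

noncomputable def esymmMean (s : Multiset K) (j : ℕ) : K := s.esymm j / (card s).choose j

theorem esymmMean_eq_zero_of_card_lt {s : Multiset K} {j : ℕ} (h : card s < j) :
    s.esymmMean j = 0 := by
  simp [esymmMean, esymm_eq_zero_of_card_lt h]

theorem esymmMean_card (s : Multiset K) : s.esymmMean (card s) = s.prod := by
  simp [esymmMean, esymm_card]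

theorem esymmMean_succ [CharZero K] (s : Multiset K) {j : ℕ} (hj : j < card s) :
    s.esymmMean (j + 1) = (j + 1) * s.esymm (j + 1) / ((card s - j) * (card s).choose j) := by
  have hchoose : ((card s).choose (j + 1) : K) * (j + 1) = (card s - j) * (card s).choose j := by
    rw [← Nat.cast_sub hj.le, mul_comm (((card s - j : ℕ)) : K)]
    exact_mod_cast Nat.choose_succ_right_eq (card s) j
  have hne : ((card s).choose (j + 1) : K) ≠ 0 := Nat.cast_ne_zero.mpr (Nat.choose_pos hj).ne'
  rw [esymmMean, ← hchoose]
  field_simp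

theorem prod_mul_esymmMean_map_inv {s : Multiset K} (hs : (0 : K) ∉ s) {j : ℕ}
    (hj : j ≤ card s) : s.prod * (s.map (·⁻¹)).esymmMean j = s.esymmMean (card s - j) := by
  rw [esymmMean, esymmMean, card_map, Nat.choose_symm hj, mul_div_assoc',
    prod_mul_esymm_map_inv hs hj]

end Multiset

namespace Polynomial

theorem Splits.derivative_of_real {p : ℝ[X]} (hp : p.Splits) : p.derivative.Splits := by
  rw [splits_iff_card_roots] at hp ⊢
  refine le_antisymm (card_roots' _) ?_
  have := card_roots_le_derivative p
  rw [natDegree_derivative]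
  omega

theorem Splits.natDegree_mul_esymm_roots_derivative {p : ℝ[X]} (hp : p.Splits) {j : ℕ}
    (hj : j < p.natDegree) :
    p.natDegree * p.derivative.roots.esymm j = (p.natDegree - j) * p.roots.esymm j := by
  obtain ⟨n, hn⟩ : ∃ n, p.natDegree = n + 1 := ⟨p.natDegree - 1, by omega⟩
  have hlc : p.leadingCoeff ≠ 0 := leadingCoeff_ne_zero.mpr (by rintro rfl; simp at hn)
  have hcoeff := coeff_derivative p (n - j)
  rw [coeff_eq_esymm_roots_of_splits hp.derivative_of_real (by rw [natDegree_derivative]; omega),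
    coeff_eq_esymm_roots_of_splits hp (by omega), leadingCoeff_derivative, natDegree_derivative,
    hn, show n + 1 - 1 - (n - j) = j by omega, show n + 1 - (n - j + 1) = j by omega] at hcoeff
  rw [hn]
  have hcast : ((n - j : ℕ) : ℝ) + 1 = (n : ℝ) + 1 - j := by
    push_cast [show j ≤ n by omega]; ring
  rw [hcast] at hcoeff
  have h1 : p.leadingCoeff * (-1) ^ j ≠ 0 := by simp [hlc]
  apply mul_left_cancel₀ h1
  push_cast at hcoeff ⊢
  linear_combination hcoeff

theorem Splits.esymmMean_roots_derivative {p : ℝ[X]} (hp : p.Splits) {j : ℕ}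
    (hj : j < p.natDegree) : p.derivative.roots.esymmMean j = p.roots.esymmMean j := by
  have h := hp.natDegree_mul_esymm_roots_derivative hj
  obtain ⟨n, hn⟩ : ∃ n, p.natDegree = n + 1 := ⟨p.natDegree - 1, by omega⟩
  rw [hn] at h hj
  have hchoose : (n.choose j : ℝ) * (n + 1) = (n + 1).choose j * (n + 1 - j) := by
    rw [← Nat.cast_succ, ← Nat.cast_sub hj.le]
    exact_mod_cast Nat.choose_mul_succ_eq n j
  have hn0 : (n.choose j : ℝ) ≠ 0 := Nat.cast_ne_zero.mpr (Nat.choose_pos (by omega)).ne'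
  have hn1 : ((n + 1).choose j : ℝ) ≠ 0 := Nat.cast_ne_zero.mpr (Nat.choose_pos hj.le).ne'
  have hnj : (n : ℝ) + 1 - j ≠ 0 := by
    rw [← Nat.cast_succ, ← Nat.cast_sub hj.le]; exact Nat.cast_ne_zero.mpr (by omega)
  rw [Multiset.esymmMean, Multiset.esymmMean, splits_iff_card_roots.mp hp,
    splits_iff_card_roots.mp hp.derivative_of_real, natDegree_derivative, hn,
    Nat.add_sub_cancel, div_eq_div_iff hn0 hn1]
  apply mul_left_cancel₀ hnj
  push_cast at h
  linear_combination (n.choose j : ℝ) * h - p.derivative.roots.esymm j * hchoose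

end Polynomial

namespace Multiset

open Polynomial

theorem exists_card_eq_esymmMean_eq (s : Multiset ℝ) {d : ℕ} (hd : d ≤ card s) :
    ∃ t : Multiset ℝ, card t = d ∧ ∀ j ≤ d, t.esymmMean j = s.esymmMean j := by
  obtain ⟨n, hn⟩ := Nat.exists_eq_add_of_le hd
  induction n generalizing s with
  | zero => exact ⟨s, hn, fun _ _ => rfl⟩
  | succ n ih =>
    set p : ℝ[X] := (s.map (X - C ·)).prod
    have hroots : p.roots = s := roots_multiset_prod_X_sub_C s
    have hdeg : p.natDegree = card s := natDegree_multiset_prod_X_sub_C_eq_card s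
    have hp : p.Splits := splits_iff_card_roots.mpr (by rw [hroots, hdeg])
    have hcard : card p.derivative.roots = d + n := by
      rw [splits_iff_card_roots.mp hp.derivative_of_real, natDegree_derivative, hdeg, hn]
      rfl
    obtain ⟨t, ht, hE⟩ := ih p.derivative.roots (by omega) hcard
    refine ⟨t, ht, fun j hj => ?_⟩
    rw [hE j hj, hp.esymmMean_roots_derivative (by omega), hroots]

theorem esymmMean_two_le_sq (s : Multiset ℝ) : s.esymmMean 2 ≤ s.esymmMean 1 ^ 2 := by
  rcases lt_or_ge (card s) 2 with hs | hs
  · rw [esymmMean_eq_zero_of_card_lt hs]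
    positivity
  obtain ⟨t, ht, hE⟩ := s.exists_card_eq_esymmMean_eq hs
  obtain ⟨x, y, rfl⟩ := card_eq_two.mp ht
  rw [← hE 1 (by norm_num), ← hE 2 le_rfl]
  simp only [esymmMean, insert_eq_cons, esymm_pair_one, esymm_pair_two, card_cons,
    card_singleton, Nat.reduceAdd, Nat.choose_self, Nat.choose_succ_self_right, Nat.cast_one,
    Nat.cast_ofNat, div_one]
  nlinarith [sq_nonneg (x - y)]

theorem esymmMean_mul_esymmMean_le_sq_of_card_eq {s : Multiset ℝ} {m : ℕ}
    (hs : card s = m + 2) :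
    s.esymmMean m * s.esymmMean (m + 2) ≤ s.esymmMean (m + 1) ^ 2 := by
  by_cases h0 : (0 : ℝ) ∈ s
  · rw [← hs, esymmMean_card, prod_eq_zero h0, mul_zero]
    positivity
  set u := s.map (·⁻¹)
  have hE0 : s.esymmMean (m + 2) = s.prod := by rw [← hs, esymmMean_card]
  have hE1 : s.esymmMean (m + 1) = s.prod * u.esymmMean 1 := by
    rw [prod_mul_esymmMean_map_inv h0 (by omega), hs]
    rfl
  have hE2 : s.esymmMean m = s.prod * u.esymmMean 2 := by
    rw [prod_mul_esymmMean_map_inv h0 (by omega), hs, Nat.add_sub_cancel]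
  calc s.esymmMean m * s.esymmMean (m + 2) = s.prod ^ 2 * u.esymmMean 2 := by
        rw [hE0, hE2]; ring
    _ ≤ s.prod ^ 2 * u.esymmMean 1 ^ 2 := by gcongr; exact u.esymmMean_two_le_sq
    _ = s.esymmMean (m + 1) ^ 2 := by rw [hE1]; ring

theorem esymmMean_mul_esymmMean_add_two_le_sq (s : Multiset ℝ) (m : ℕ) :
    s.esymmMean m * s.esymmMean (m + 2) ≤ s.esymmMean (m + 1) ^ 2 := by
  rcases lt_or_ge (card s) (m + 2) with hs | hs
  · rw [esymmMean_eq_zero_of_card_lt hs, mul_zero]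
    positivity
  obtain ⟨t, ht, hE⟩ := s.exists_card_eq_esymmMean_eq hs
  rw [← hE m (by omega), ← hE (m + 1) (by omega), ← hE (m + 2) le_rfl]
  exact esymmMean_mul_esymmMean_le_sq_of_card_eq ht

theorem newton_maclaurin (s : Multiset ℝ) {i j : ℕ} (hij : i ≤ j) (hjs : j + 1 ≤ card s)
    (hpos : ∀ m ≤ j + 1, 0 < s.esymm m) :
    (j + 1) * ((card s : ℝ) - i) * s.esymm i * s.esymm (j + 1) ≤
      (i + 1) * ((card s : ℝ) - j) * s.esymm (i + 1) * s.esymm j := by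
  have hchoose (m : ℕ) (hm : m ≤ card s) : (0 : ℝ) < (card s).choose m := by
    exact_mod_cast Nat.choose_pos hm
  have hmean := mul_le_mul_of_mul_le_sq (a := s.esymmMean) (k := j + 1)
    (fun m hm => div_pos (hpos m hm) (hchoose m (by omega)))
    (fun m _ => s.esymmMean_mul_esymmMean_add_two_le_sq m) hij le_rfl
  rw [esymmMean_succ s (by omega), esymmMean_succ s (by omega), esymmMean, esymmMean] at hmean
  have hi : (0 : ℝ) < card s - i := sub_pos.mpr (by exact_mod_cast (show i < card s by omega))
  have hj : (0 : ℝ) < card s - j := sub_pos.mpr (by exact_mod_cast (show j < card s by omega))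
  have hci := hchoose i (by omega)
  have hcj := hchoose j (by omega)
  field_simp at hmean
  linarith

end Multiset

theorem esymm_eq_multiset_esymm (n j : ℕ) (x : Fin n → ℝ) :
    esymm n j x = (Finset.univ.val.map x).esymm j :=
  (Finset.esymm_map_val x _ j).symm

theorem esymmZ_natCast (n j : ℕ) (x : Fin n → ℝ) : esymmZ n j x = esymm n j x := by
  simp [esymmZ]

/-- Newton–Maclaurin inequality on `Γ_k`:
`k (n-l+1) σ_{l-1} σ_k ≤ l (n-k+1) σ_l σ_{k-1}` for `0 ≤ l < k ≤ n`. -/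
theorem newton_maclaurin (n k l : ℕ) (hlk : l < k) (hkn : k ≤ n)
    (x : Fin n → ℝ) (hx : inGamma n k x) :
    (k : ℝ) * ((n : ℝ) - l + 1) * esymmZ n ((l : ℤ) - 1) x * esymmZ n k x ≤
      (l : ℝ) * ((n : ℝ) - k + 1) * esymmZ n l x * esymmZ n ((k : ℤ) - 1) x := by
  obtain _ | i := l
  · simp [esymmZ]
  obtain ⟨j, rfl⟩ : ∃ j, k = j + 1 := ⟨k - 1, by omega⟩
  have hcard : Multiset.card (Finset.univ.val.map x) = n := by simp
  have hpos (m : ℕ) (hm : m ≤ j + 1) : 0 < (Finset.univ.val.map x).esymm m := by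
    rcases m with _ | m
    · simp
    · rw [← esymm_eq_multiset_esymm]; exact hx _ (by omega) hm
  have key := Multiset.newton_maclaurin _ (by omega : i ≤ j) (by rw [hcard]; omega) hpos
  simp only [hcard, ← esymm_eq_multiset_esymm] at key
  simp only [show ((i + 1 : ℕ) : ℤ) - 1 = i by omega,
    show ((j + 1 : ℕ) : ℤ) - 1 = j by omega, esymmZ_natCast]
  push_cast
  linarith
end

section
/- Each cone Γ_k is an open convex cone in ℝ^n with vertex at the origin: if λ, μ ∈ Γ_k and s, t > 0 then sλ + tμ ∈ Γ_k, and Γ_k is open. -/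
/-!
Openness is clear since every `σ_j` is continuous. As `Γ_k` is a cone, convexity amounts to
`Γ_k + Γ_k ⊆ Γ_k`, proved over arbitrary finite index sets by induction on `k`, together with the
superadditivity of `q_k = σ_{k+1} / σ_k` on `Γ_{k+1}`. Writing `x|i` for `x` with the entry `i`
removed, the identity `(k + 2) q_{k+1}(x) = σ_1(x) - ∑ᵢ xᵢ² / (xᵢ + q_k(x|i))` reduces the
superadditivity of `q_{k+1}` to that of `q_k` on the restrictions, by
`(u + v)² / (a + b) ≤ u² / a + v² / b`.

This needs `x|i ∈ Γ_{k+1}` whenever `x ∈ Γ_{k+2}`. The function `σ_{k+1}(·|i)` cannot vanish on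
`Γ_{k+2}`: a zero would force `σ_{k+2}(x|i) ≤ 0`, because three consecutive coefficients of the
real-rooted polynomial `∏ (X + xᵢ)` cannot be `+, 0, +`. Since `Γ_{k+2}` is star-shaped about
`(1, …, 1)`, where `σ_{k+1}(·|i)` is positive, it is positive on all of `Γ_{k+2}`.
-/

open Finset

section Algebra

variable {ι R : Type*} [CommRing R]

def esymmOn (A : Finset ι) (j : ℕ) (x : ι → R) : R :=
  ∑ s ∈ A.powersetCard j, ∏ i ∈ s, x i

@[simp]
lemma esymmOn_zero (A : Finset ι) (x : ι → R) : esymmOn A 0 x = 1 := by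
  simp [esymmOn]

lemma esymmOn_eq_zero_of_card_lt {A : Finset ι} {j : ℕ} (h : #A < j) (x : ι → R) :
    esymmOn A j x = 0 := by
  simp [esymmOn, powersetCard_eq_empty.2 h]

lemma esymmOn_one (A : Finset ι) (x : ι → R) : esymmOn A 1 x = ∑ i ∈ A, x i := by
  simp [esymmOn, powersetCard_one]

lemma esymmOn_one_add (A : Finset ι) (x y : ι → R) :
    esymmOn A 1 (x + y) = esymmOn A 1 x + esymmOn A 1 y := by
  simp only [esymmOn_one, Pi.add_apply, sum_add_distrib]

lemma esymmOn_const_one (A : Finset ι) (j : ℕ) : esymmOn A j (1 : ι → R) = (#A).choose j := by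
  simp [esymmOn]

lemma esymmOn_smul (A : Finset ι) (j : ℕ) (c : R) (x : ι → R) :
    esymmOn A j (c • x) = c ^ j * esymmOn A j x := by
  rw [esymmOn, esymmOn, mul_sum]
  refine sum_congr rfl fun s hs => ?_
  simp [prod_mul_distrib, (mem_powersetCard.1 hs).2]

lemma esymmOn_succ_of_mem [DecidableEq ι] {A : Finset ι} {i : ι} (hi : i ∈ A) (j : ℕ)
    (x : ι → R) :
    esymmOn A (j + 1) x = esymmOn (A.erase i) (j + 1) x + x i * esymmOn (A.erase i) j x := by
  simp only [esymmOn, ← esymm_map_val]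
  rw [← insert_erase hi, insert_val_of_notMem (notMem_erase i A), erase_insert_eq_erase,
    erase_eq_of_notMem (notMem_erase i A), Multiset.map_cons]
  simp [Multiset.esymm, Multiset.powersetCard_cons, Multiset.sum_map_mul_left]

lemma sum_esymmOn_erase [DecidableEq ι] (A : Finset ι) (j : ℕ) (x : ι → R) :
    ∑ i ∈ A, esymmOn (A.erase i) j x = (#A - j) • esymmOn A j x := by
  simp only [esymmOn, smul_sum]
  rw [sum_comm' (t' := A.powersetCard j) (s' := (A \ ·))]
  · refine sum_congr rfl fun s hs => ?_
    rw [sum_const, card_sdiff_of_subset (mem_powersetCard.1 hs).1, (mem_powersetCard.1 hs).2]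
  · intro i s
    simp only [mem_powersetCard, mem_sdiff, subset_erase]
    tauto

lemma sum_mul_esymmOn_erase [DecidableEq ι] (A : Finset ι) (j : ℕ) (x : ι → R) :
    ∑ i ∈ A, x i * esymmOn (A.erase i) j x = (j + 1) * esymmOn A (j + 1) x := by
  have hsplit : ∀ i ∈ A, x i * esymmOn (A.erase i) j x
      = esymmOn A (j + 1) x - esymmOn (A.erase i) (j + 1) x := fun i hi => by
    rw [esymmOn_succ_of_mem hi]; ring
  rw [sum_congr rfl hsplit, sum_sub_distrib, sum_esymmOn_erase, sum_const]
  rcases le_or_gt (j + 1) #A with h | h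
  · rw [nsmul_eq_mul, nsmul_eq_mul, Nat.cast_sub h]; push_cast; ring
  · simp [esymmOn_eq_zero_of_card_lt h]

lemma succ_succ_mul_esymmOn [DecidableEq ι] (A : Finset ι) (j : ℕ) (x : ι → R) :
    (j + 2) * esymmOn A (j + 2) x
      = esymmOn A 1 x * esymmOn A (j + 1) x - ∑ i ∈ A, x i ^ 2 * esymmOn (A.erase i) j x := by
  have h := sum_mul_esymmOn_erase A (j + 1) x
  have hsplit : ∀ i ∈ A, x i * esymmOn (A.erase i) (j + 1) x
      = x i * esymmOn A (j + 1) x - x i ^ 2 * esymmOn (A.erase i) j x := fun i hi => by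
    rw [esymmOn_succ_of_mem hi]; ring
  rw [sum_congr rfl hsplit, sum_sub_distrib, ← sum_mul, ← esymmOn_one] at h
  push_cast at h
  linear_combination -h

lemma prod_add_const_eq_sum_esymmOn (s : Finset ι) (x : ι → R) (b : R) :
    ∏ i ∈ s, (x i + b) = ∑ m ∈ range (#s + 1), esymmOn s m x * b ^ (#s - m) := by
  have := congrArg (Polynomial.eval b) (Multiset.prod_X_add_C_eq_sum_esymm (s.val.map x))
  simpa [Polynomial.eval_multiset_prod, Polynomial.eval_finsetSum, Polynomial.eval_prod, esymmOn,
    esymm_map_val, add_comm, mul_comm] using this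

lemma sum_powersetCard_esymmOn [DecidableEq ι] (A : Finset ι) {m j : ℕ} (hmj : m ≤ j)
    (x : ι → R) :
    ∑ s ∈ A.powersetCard j, esymmOn s m x = (#A - m).choose (j - m) • esymmOn A m x := by
  simp only [esymmOn, smul_sum]
  rw [sum_comm' (t' := A.powersetCard m) (s' := fun t => (A.powersetCard j).filter (t ⊆ ·))]
  · refine sum_congr rfl fun t ht => ?_
    obtain ⟨htA, rfl⟩ := mem_powersetCard.1 ht
    rw [sum_const, card_filter_powersetCard_subset t A j htA hmj]
  · intro s t
    simp only [mem_powersetCard, mem_filter]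
    constructor
    · rintro ⟨hs, ht⟩; exact ⟨⟨hs, ht.1⟩, ht.1.trans hs.1, ht.2⟩
    · rintro ⟨⟨hs, hts⟩, ht⟩; exact ⟨hs, hts, ht.2⟩

lemma esymmOn_add_const [DecidableEq ι] (A : Finset ι) (j : ℕ) (x : ι → R) (b : R) :
    esymmOn A j (fun i => x i + b)
      = ∑ m ∈ range (j + 1), (#A - m).choose (j - m) • (b ^ (j - m) * esymmOn A m x) := by
  calc esymmOn A j (fun i => x i + b)
      = ∑ s ∈ A.powersetCard j, ∑ m ∈ range (j + 1), esymmOn s m x * b ^ (j - m) :=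
        sum_congr rfl fun s hs => by
          rw [prod_add_const_eq_sum_esymmOn, (mem_powersetCard.1 hs).2]
    _ = ∑ m ∈ range (j + 1), (#A - m).choose (j - m) • (b ^ (j - m) * esymmOn A m x) := by
        rw [sum_comm]
        refine sum_congr rfl fun m hm => ?_
        rw [← sum_mul, sum_powersetCard_esymmOn A (Nat.lt_succ_iff.1 (mem_range.1 hm)),
          smul_mul_assoc, mul_comm]

end Algebra

namespace Polynomial

theorem Splits.reverse {K : Type*} [Field K] {f : K[X]} (hf : f.Splits) : f.reverse.Splits := by
  induction hf using Submonoid.closure_induction with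
  | mem g hg =>
    rcases hg with ⟨a, rfl⟩ | ⟨a, rfl⟩
    · simp [Splits.C]
    · exact .of_natDegree_le_one ((reverse_natDegree_le _).trans (natDegree_X_add_C a).le)
  | one => rw [← C_1, reverse_C]; exact Splits.C 1
  | mul f g _ _ hf hg => rw [reverse_mul_of_domain]; exact hf.mul hg

theorem Splits.derivative {f : ℝ[X]} (hf : f.Splits) : (Polynomial.derivative f).Splits := by
  rw [splits_iff_card_roots] at hf ⊢
  rcases Nat.eq_zero_or_pos f.natDegree with h0 | h0
  · simp [derivative_of_natDegree_zero h0]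
  · have := card_roots_le_derivative f
    have := card_roots' (Polynomial.derivative f)
    have := natDegree_derivative_le f
    omega

theorem Splits.iterate_derivative {f : ℝ[X]} (hf : f.Splits) (n : ℕ) :
    (Polynomial.derivative^[n] f).Splits := by
  induction n with
  | zero => exact hf
  | succ n ih => rw [Function.iterate_succ_apply']; exact ih.derivative

theorem Splits.coeff_zero_mul_coeff_two_nonpos {f : ℝ[X]} (hf : f.Splits) (h1 : f.coeff 1 = 0) :
    f.coeff 0 * f.coeff 2 ≤ 0 := by
  -- Reversing `f` and differentiating `d - 2` times leaves a real-rooted quadratic whose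
  -- coefficients are positive multiples of `c₂, c₁ = 0, c₀`.
  by_contra! hpos
  set d := f.natDegree
  have hd : 2 ≤ d := le_natDegree_of_ne_zero (right_ne_zero_of_mul hpos.ne')
  set g := Polynomial.derivative^[d - 2] f.reverse
  have hg : ∀ i ≤ 2,
      g.coeff i = ((i + (d - 2)).descFactorial (d - 2) : ℝ) * f.coeff (2 - i) := by
    intro i hi
    rw [coeff_iterate_derivative, coeff_reverse, revAt_le (by omega), nsmul_eq_mul]
    congr 2
    omega
  have hc0 : (0 : ℝ) < (0 + (d - 2)).descFactorial (d - 2) := by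
    exact_mod_cast Nat.descFactorial_pos.2 (by omega)
  have hc2 : (0 : ℝ) < (2 + (d - 2)).descFactorial (d - 2) := by
    exact_mod_cast Nat.descFactorial_pos.2 (by omega)
  have hg2 : g.coeff 2 ≠ 0 := by
    rw [hg 2 le_rfl]; exact mul_ne_zero hc2.ne' (left_ne_zero_of_mul hpos.ne')
  have hdeg : g.natDegree < 3 :=
    (natDegree_iterate_derivative _ _).trans_lt (by have := reverse_natDegree_le f; omega)
  obtain ⟨r, hr⟩ := (hf.reverse.iterate_derivative _).exists_eval_eq_zero
    fun h => hg2 (coeff_eq_zero_of_degree_lt (by rw [h]; decide))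
  rw [eval_eq_sum_range' hdeg, sum_range_succ, sum_range_succ, sum_range_one, hg 0 (by norm_num),
    hg 1 (by norm_num), hg 2 le_rfl] at hr
  simp only [Nat.sub_self, Nat.sub_zero, show 2 - 1 = 1 from rfl, h1, pow_zero, pow_one] at hr
  have key : ((0 + (d - 2)).descFactorial (d - 2) : ℝ) * (f.coeff 0 * f.coeff 2)
      + ((2 + (d - 2)).descFactorial (d - 2) : ℝ) * (f.coeff 0 * r) ^ 2 = 0 := by
    linear_combination f.coeff 0 * hr
  linarith [mul_pos hc0 hpos, mul_nonneg hc2.le (sq_nonneg (f.coeff 0 * r))]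

theorem Splits.coeff_mul_coeff_add_two_nonpos {f : ℝ[X]} (hf : f.Splits) {j : ℕ}
    (h : f.coeff (j + 1) = 0) : f.coeff j * f.coeff (j + 2) ≤ 0 := by
  have := (hf.iterate_derivative j).coeff_zero_mul_coeff_two_nonpos
    (by rw [coeff_iterate_derivative, add_comm, h, smul_zero])
  simp only [coeff_iterate_derivative, nsmul_eq_mul, zero_add, add_comm 2 j] at this
  have hc : (0 : ℝ) < j.descFactorial j * (j + 2).descFactorial j := by
    exact_mod_cast Nat.mul_pos (Nat.descFactorial_pos.2 le_rfl) (Nat.descFactorial_pos.2 (by omega))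
  nlinarith

end Polynomial

section GardingCone

variable {ι : Type*}

open Polynomial in
lemma esymmOn_mul_esymmOn_add_two_nonpos (A : Finset ι) (x : ι → ℝ) {m : ℕ}
    (h : esymmOn A (m + 1) x = 0) : esymmOn A m x * esymmOn A (m + 2) x ≤ 0 := by
  rcases lt_or_ge #A (m + 2) with hA | hA
  · simp [esymmOn_eq_zero_of_card_lt hA]
  have hP : (∏ i ∈ A, (X + C (x i))).Splits := Splits.prod fun i _ => Splits.X_add_C _
  have hcoeff : ∀ k ≤ #A, (∏ i ∈ A, (X + C (x i))).coeff (#A - k) = esymmOn A k x :=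
    fun k hk => by rw [prod_X_add_C_coeff _ _ (Nat.sub_le _ _), Nat.sub_sub_self hk]; rfl
  have := hP.coeff_mul_coeff_add_two_nonpos (j := #A - (m + 2))
    (by rw [show #A - (m + 2) + 1 = #A - (m + 1) by omega, hcoeff _ (by omega), h])
  rwa [show #A - (m + 2) + 2 = #A - m by omega, hcoeff _ hA, hcoeff _ (by omega), mul_comm] at this

lemma continuous_esymmOn (A : Finset ι) (j : ℕ) :
    Continuous (esymmOn A j : (ι → ℝ) → ℝ) :=
  continuous_finsetSum _ fun _ _ => continuous_finsetProd _ fun i _ => continuous_apply i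

-- Including `j = 0` changes nothing, as `σ_0 = 1`.
def InGammaOn (A : Finset ι) (k : ℕ) (x : ι → ℝ) : Prop :=
  ∀ j ≤ k, 0 < esymmOn A j x

variable {A : Finset ι} {k : ℕ} {x y : ι → ℝ}

lemma inGammaOn_zero : InGammaOn A 0 x := fun j hj => by simp [Nat.le_zero.1 hj]

lemma InGammaOn.mono {k' : ℕ} (hx : InGammaOn A k x) (h : k' ≤ k) : InGammaOn A k' x :=
  fun j hj => hx j (hj.trans h)

lemma InGammaOn.le_card (hx : InGammaOn A k x) : k ≤ #A := by
  by_contra! h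
  exact (hx k le_rfl).ne' (esymmOn_eq_zero_of_card_lt h x)

lemma inGammaOn_one (h : k ≤ #A) : InGammaOn A k 1 := fun j hj => by
  rw [esymmOn_const_one]; exact_mod_cast Nat.choose_pos (hj.trans h)

lemma InGammaOn.smul (hx : InGammaOn A k x) {c : ℝ} (hc : 0 < c) : InGammaOn A k (c • x) :=
  fun j hj => by rw [esymmOn_smul]; exact mul_pos (pow_pos hc j) (hx j hj)

lemma InGammaOn.add_const [DecidableEq ι] (hx : InGammaOn A k x) {b : ℝ} (hb : 0 ≤ b) :
    InGammaOn A k (fun i => x i + b) := fun j hj => by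
  rw [esymmOn_add_const]
  refine sum_pos' (fun m hm => ?_) ⟨j, self_mem_range_succ j, by simpa using hx j hj⟩
  have := hx m ((Nat.lt_succ_iff.1 (mem_range.1 hm)).trans hj)
  positivity

lemma starConvex_inGammaOn (A : Finset ι) (k : ℕ) : StarConvex ℝ 1 {x | InGammaOn A k x} := by
  classical
  intro y hy a b ha hb hab
  rcases hb.eq_or_lt with rfl | hb
  · obtain rfl : a = 1 := by simpa using hab
    simpa using inGammaOn_one hy.le_card
  · have : a • 1 + b • y = b • fun i => y i + a / b := by
      ext i; simp [field]; ring
    rw [Set.mem_ofPred_eq, this]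
    exact (hy.add_const (by positivity)).smul hb

lemma InGammaOn.pos_of_forall_ne_zero (hx : InGammaOn A k x) {f : (ι → ℝ) → ℝ}
    (hf : Continuous f) (hne : ∀ w, InGammaOn A k w → f w ≠ 0) (h1 : 0 < f 1) : 0 < f x := by
  have hconn := ((starConvex_inGammaOn A k).isPathConnected
    (inGammaOn_one hx.le_card)).isConnected.isPreconnected
  by_contra! hfx
  obtain ⟨w, hw, hw0⟩ := hconn.intermediate_value hx (inGammaOn_one hx.le_card)
    hf.continuousOn ⟨hfx, h1.le⟩
  exact hne w hw hw0

theorem InGammaOn.erase [DecidableEq ι] {i : ι} (hi : i ∈ A) :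
    ∀ {k : ℕ} {x : ι → ℝ}, InGammaOn A (k + 1) x → InGammaOn (A.erase i) k x := by
  intro k
  induction k with
  | zero => exact fun _ => inGammaOn_zero
  | succ k ih =>
    intro x hx
    have hne : ∀ w, InGammaOn A (k + 2) w → esymmOn (A.erase i) (k + 1) w ≠ 0 := by
      intro w hw h0
      have hnewton := esymmOn_mul_esymmOn_add_two_nonpos (A.erase i) w h0
      have hk := ih (hw.mono (Nat.le_succ _)) k le_rfl
      have h2 := hw (k + 2) le_rfl
      rw [esymmOn_succ_of_mem hi (k + 1), h0, mul_zero, add_zero] at h2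
      nlinarith
    intro j hj
    rcases hj.lt_or_eq with hj | rfl
    · exact ih (hx.mono (Nat.le_succ _)) j (Nat.lt_succ_iff.1 hj)
    · exact hx.pos_of_forall_ne_zero (continuous_esymmOn _ _) hne
        (inGammaOn_one (by rw [card_erase_of_mem hi]; have := hx.le_card; omega) _ le_rfl)

lemma add_sq_div_add_le {K : Type*} [Field K] [LinearOrder K] [IsStrictOrderedRing K]
    (u v : K) {a b : K} (ha : 0 < a) (hb : 0 < b) :
    (u + v) ^ 2 / (a + b) ≤ u ^ 2 / a + v ^ 2 / b := by
  simpa [Fin.sum_univ_two] using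
    sq_sum_div_le_sum_sq_div univ ![u, v] (g := ![a, b]) (by simp [Fin.forall_fin_two, ha, hb])

noncomputable def esymmRatio (A : Finset ι) (k : ℕ) (x : ι → ℝ) : ℝ :=
  esymmOn A (k + 1) x / esymmOn A k x

lemma InGammaOn.esymmRatio_pos (hx : InGammaOn A (k + 1) x) : 0 < esymmRatio A k x :=
  div_pos (hx _ le_rfl) (hx _ k.le_succ)

lemma InGammaOn.succ_of_esymmRatio_pos (hx : InGammaOn A k x) (h : 0 < esymmRatio A k x) :
    InGammaOn A (k + 1) x := by
  intro j hj
  rcases hj.lt_or_eq with hj | rfl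
  · exact hx j (Nat.lt_succ_iff.1 hj)
  · simpa [esymmRatio, hx k le_rfl] using mul_pos h (hx k le_rfl)

lemma esymmOn_succ_div_esymmOn_erase [DecidableEq ι] {i : ι} (hi : i ∈ A)
    (h : esymmOn (A.erase i) k x ≠ 0) :
    esymmOn A (k + 1) x / esymmOn (A.erase i) k x = x i + esymmRatio (A.erase i) k x := by
  rw [esymmOn_succ_of_mem hi, esymmRatio]
  field_simp
  ring

lemma succ_succ_mul_esymmRatio [DecidableEq ι] (h : esymmOn A (k + 1) x ≠ 0) :
    (k + 2) * esymmRatio A (k + 1) x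
      = esymmOn A 1 x - ∑ i ∈ A, x i ^ 2 / (esymmOn A (k + 1) x / esymmOn (A.erase i) k x) := by
  simp only [esymmRatio, div_div_eq_mul_div, ← sum_div]
  rw [eq_sub_iff_add_eq, ← mul_div_assoc, ← add_div, div_eq_iff h]
  linear_combination succ_succ_mul_esymmOn A k x

lemma esymmRatio_succ_add_le [DecidableEq ι] (hx : InGammaOn A (k + 2) x)
    (hy : InGammaOn A (k + 2) y) (hxy : InGammaOn A (k + 1) (x + y))
    (hxy_erase : ∀ i ∈ A, 0 < esymmOn (A.erase i) k (x + y))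
    (ih : ∀ i ∈ A, esymmRatio (A.erase i) k x + esymmRatio (A.erase i) k y
      ≤ esymmRatio (A.erase i) k (x + y)) :
    esymmRatio A (k + 1) x + esymmRatio A (k + 1) y ≤ esymmRatio A (k + 1) (x + y) := by
  set a : (ι → ℝ) → ι → ℝ := fun z i => esymmOn A (k + 1) z / esymmOn (A.erase i) k z
  have ha_pos : ∀ z, InGammaOn A (k + 2) z → ∀ i ∈ A, 0 < a z i := fun z hz i hi =>
    div_pos (hz _ (k + 1).le_succ) ((hz.mono (k + 1).le_succ).erase hi k le_rfl)
  have ha_add : ∀ i ∈ A, a x i + a y i ≤ a (x + y) i := fun i hi => by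
    simp only [a]
    rw [esymmOn_succ_div_esymmOn_erase hi ((hx.mono (k + 1).le_succ).erase hi k le_rfl).ne',
      esymmOn_succ_div_esymmOn_erase hi ((hy.mono (k + 1).le_succ).erase hi k le_rfl).ne',
      esymmOn_succ_div_esymmOn_erase hi (hxy_erase i hi).ne', Pi.add_apply]
    linarith [ih i hi]
  have hterm : ∀ i ∈ A, (x + y) i ^ 2 / a (x + y) i ≤ x i ^ 2 / a x i + y i ^ 2 / a y i :=
    fun i hi => calc
      (x + y) i ^ 2 / a (x + y) i ≤ (x i + y i) ^ 2 / (a x i + a y i) :=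
        div_le_div_of_nonneg_left (sq_nonneg _)
          (add_pos (ha_pos x hx i hi) (ha_pos y hy i hi)) (ha_add i hi)
      _ ≤ x i ^ 2 / a x i + y i ^ 2 / a y i :=
        add_sq_div_add_le _ _ (ha_pos x hx i hi) (ha_pos y hy i hi)
  have hsum := sum_le_sum hterm
  refine le_of_mul_le_mul_left ?_ (by positivity : (0 : ℝ) < k + 2)
  rw [mul_add, succ_succ_mul_esymmRatio (hx (k + 1) (k + 1).le_succ).ne',
    succ_succ_mul_esymmRatio (hy (k + 1) (k + 1).le_succ).ne',
    succ_succ_mul_esymmRatio (hxy (k + 1) le_rfl).ne', esymmOn_one_add]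
  simp only [a, sum_add_distrib] at hsum
  linarith

theorem InGammaOn.add_and_esymmRatio_add_le [DecidableEq ι] (k : ℕ) :
    ∀ {A : Finset ι} {x y : ι → ℝ}, InGammaOn A (k + 1) x → InGammaOn A (k + 1) y →
      InGammaOn A (k + 1) (x + y) ∧
        esymmRatio A k x + esymmRatio A k y ≤ esymmRatio A k (x + y) := by
  induction k with
  | zero =>
    intro A x y hx hy
    have h1 : esymmRatio A 0 (x + y) = esymmRatio A 0 x + esymmRatio A 0 y := by
      simp only [esymmRatio, zero_add, esymmOn_zero, div_one, esymmOn_one_add]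
    refine ⟨inGammaOn_zero.succ_of_esymmRatio_pos ?_, h1.ge⟩
    rw [h1]
    exact add_pos hx.esymmRatio_pos hy.esymmRatio_pos
  | succ k ih =>
    intro A x y hx hy
    have hxy := (ih (hx.mono k.succ.le_succ) (hy.mono k.succ.le_succ)).1
    have h_erase := fun i (hi : i ∈ A) => ih (hx.erase hi) (hy.erase hi)
    have hratio := esymmRatio_succ_add_le hx hy hxy
      (fun i hi => (h_erase i hi).1 k k.le_succ) (fun i hi => (h_erase i hi).2)
    exact ⟨hxy.succ_of_esymmRatio_pos
      ((add_pos hx.esymmRatio_pos hy.esymmRatio_pos).trans_le hratio), hratio⟩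

theorem InGammaOn.add (hx : InGammaOn A k x) (hy : InGammaOn A k y) : InGammaOn A k (x + y) := by
  classical
  cases k with
  | zero => exact inGammaOn_zero
  | succ k => exact (add_and_esymmRatio_add_le k hx hy).1

lemma isOpen_setOf_inGammaOn (A : Finset ι) (k : ℕ) : IsOpen {x | InGammaOn A k x} := by
  have : {x | InGammaOn A k x} = ⋂ j ∈ Set.Iic k, {x | 0 < esymmOn A j x} := by
    ext; simp [InGammaOn]
  rw [this]
  exact (Set.finite_Iic k).isOpen_biInter fun j _ =>
    isOpen_lt continuous_const (continuous_esymmOn A j)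

end GardingCone

lemma inGamma_iff_inGammaOn_univ {n k : ℕ} {x : Fin n → ℝ} :
    inGamma n k x ↔ InGammaOn univ k x := by
  refine ⟨fun h j hj => ?_, fun h j _ hj => h j hj⟩
  rcases j with _ | j
  · simp
  · exact h (j + 1) j.succ_pos hj

theorem gamma_open_convex_cone_general (n k : ℕ) :
    (∀ (x y : Fin n → ℝ) (s t : ℝ), inGamma n k x → inGamma n k y →
      0 < s → 0 < t → inGamma n k (s • x + t • y)) ∧
    IsOpen {x : Fin n → ℝ | inGamma n k x} := by
  simp only [inGamma_iff_inGammaOn_univ]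
  exact ⟨fun x y s t hx hy hs ht => (hx.smul hs).add (hy.smul ht),
    isOpen_setOf_inGammaOn univ k⟩

/-- `Γ_k` is an open convex cone with vertex at the origin: it is stable under
positive combinations `s • λ + t • μ`, and it is an open subset of `ℝ^n`. -/
theorem gamma_open_convex_cone (n k : ℕ) (hk : 1 ≤ k) (hkn : k ≤ n) :
    (∀ (x y : Fin n → ℝ) (s t : ℝ), inGamma n k x → inGamma n k y →
      0 < s → 0 < t → inGamma n k (s • x + t • y)) ∧
    IsOpen {x : Fin n → ℝ | inGamma n k x} :=
  gamma_open_convex_cone_general n k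
end
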